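/- arXiv:1506.02508 — 8 statements merged into one kernel-verified Lean document; each statement's English description precedes it below -/
import Mathlib

section
/- Let m ≥ 1 be an integer, M a nonempty set, t₁ ∈ ℤ^m, and F_α : {t ∈ ℤ^m | t ≥ t₁} × M → M for each α ∈ {1,…,m}. Fix t₀ ∈ ℤ^m with t₀ ≥ t₁. If for every pair (t₀, x₀) with t₀ ≥ t₁ and x₀ ∈ M there exists at least one function x : {t ∈ ℤ^m | t ≥ t₀} → M satisfying x(t + 1_α) = F_α(t, x(t)) for all t ≥ t₀ and all α ∈ {1,…,m}, and x(t₀) = x₀, then F_α(t + 1_β, F_β(t, x)) = F_β(t + 1_α, F_α(t, x)) for all t ≥ t₁, all x ∈ M, and all α, β ∈ {1,…,m}. -/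
/-- `1_α ∈ ℤ^m` is nonnegative, so `t₁ ≤ t` implies `t₁ ≤ t + 1_α`
(componentwise order on `ℤ^m`). -/
theorem le_stepv {m : ℕ} {t₁ t : Fin m → ℤ} (h : t₁ ≤ t) (α : Fin m) :
    t₁ ≤ t + Pi.single α 1 :=
  le_trans h (le_add_of_nonneg_right (by
    intro β
    by_cases hb : β = α <;> simp [Pi.single_apply, hb]))

/-- The shift `t ↦ t + 1_α` on `{t ∈ ℤ^m | t ≥ t₁}`. -/
def stepv {m : ℕ} {t₁ : Fin m → ℤ} (t : {t : Fin m → ℤ // t₁ ≤ t}) (α : Fin m) :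
    {t : Fin m → ℤ // t₁ ≤ t} :=
  ⟨t.1 + Pi.single α 1, le_stepv t.2 α⟩

theorem sub_single_le {m : ℕ} (t₀ : Fin m → ℤ) (α : Fin m) :
    t₀ - Pi.single α 1 ≤ t₀ :=
  sub_le_self _ (by
    intro β
    by_cases hb : β = α <;> simp [Pi.single_apply, hb])

/-- `G₁^{(k 1)} ∘ G₂^{(k 2)} ∘ ⋯ ∘ G_m^{(k m)}`. -/
def iterAll {m : ℕ} {M : Type*} (G : Fin m → M → M) (k : Fin m → ℕ) : M → M :=
  (List.finRange m).foldr (fun α f => (G α)^[k α] ∘ f) id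

/-- Proposition 1. If for every `t₀ ≥ t₁` and `x₀ ∈ M` the
discrete multitime multiple recurrence `x(t+1_α) = F_α(t, x(t))` (for `t ≥ t₀`)
has at least one solution with `x(t₀) = x₀`, then the compatibility conditions
`F_α(t+1_β, F_β(t,x)) = F_β(t+1_α, F_α(t,x))` hold for all `t ≥ t₁`, `x ∈ M`. -/
theorem stmt_0 {m : ℕ} (hm : 1 ≤ m) {M : Type*} [Nonempty M]
    (t₁ : Fin m → ℤ)
    (F : Fin m → {t : Fin m → ℤ // t₁ ≤ t} → M → M)
    (t₀fix : Fin m → ℤ) (ht₀fix : t₁ ≤ t₀fix)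
    (hex : ∀ (t₀ : Fin m → ℤ) (ht₀ : t₁ ≤ t₀) (x₀ : M),
      ∃ x : {t : Fin m → ℤ // t₀ ≤ t} → M,
        (∀ (t : {t : Fin m → ℤ // t₀ ≤ t}) (α : Fin m),
          x (stepv t α) = F α ⟨t.1, ht₀.trans t.2⟩ (x t)) ∧
        x ⟨t₀, le_refl t₀⟩ = x₀) :
    ∀ (t : {t : Fin m → ℤ // t₁ ≤ t}) (x : M) (α β : Fin m),
      F α (stepv t β) (F β t x) = F β (stepv t α) (F α t x) := by
  intro t x α β
  obtain ⟨y, hy, hy0⟩ := hex t.1 t.2 x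
  set T0 : {s : Fin m → ℤ // t.1 ≤ s} := ⟨t.1, le_refl _⟩ with hT0
  have h1 := hy T0 α
  have h2 := hy T0 β
  have h3 := hy (stepv T0 α) β
  have h4 := hy (stepv T0 β) α
  have key : stepv (stepv T0 α) β = stepv (stepv T0 β) α := by
    apply Subtype.ext
    simp only [stepv]
    exact add_right_comm _ _ _
  rw [key] at h3
  rw [hy0] at h1 h2
  rw [h1] at h3
  rw [h2] at h4
  have e1 : (⟨T0.1, t.2.trans T0.2⟩ : {s : Fin m → ℤ // t₁ ≤ s}) = t := Subtype.ext rfl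
  have e2 : (⟨(stepv T0 α).1, t.2.trans (stepv T0 α).2⟩ : {s : Fin m → ℤ // t₁ ≤ s}) = stepv t α :=
    Subtype.ext rfl
  have e3 : (⟨(stepv T0 β).1, t.2.trans (stepv T0 β).2⟩ : {s : Fin m → ℤ // t₁ ≤ s}) = stepv t β :=
    Subtype.ext rfl
  rw [e1] at h1 h2 h3 h4
  rw [e2] at h3
  rw [e3] at h4
  rw [← h3, ← h4]
end

section
/- Let m ≥ 1 be an integer, M a nonempty set, G_α : M → M for α ∈ {1,…,m}, and t₀ ∈ ℤ^m. If for every x₀ ∈ M there exists at least one function x : {t ∈ ℤ^m | t ≥ t₀} → M satisfying x(t + 1_α) = G_α(x(t)) for all t ≥ t₀ and all α ∈ {1,…,m}, and x(t₀) = x₀, then G_α ∘ G_β = G_β ∘ G_α for all α, β ∈ {1,…,m}. -/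
/-- Theorem 2 a). If for every `x₀ ∈ M` the autonomous recurrence
`x(t+1_α) = G_α(x(t))` (for `t ≥ t₀`) has at least one solution with
`x(t₀) = x₀`, then the maps `G_α` pairwise commute. -/
theorem stmt_1 {m : ℕ} (hm : 1 ≤ m) {M : Type*} [Nonempty M]
    (G : Fin m → M → M) (t₀ : Fin m → ℤ)
    (hex : ∀ x₀ : M, ∃ x : {t : Fin m → ℤ // t₀ ≤ t} → M,
      (∀ (t : {t : Fin m → ℤ // t₀ ≤ t}) (α : Fin m), x (stepv t α) = G α (x t)) ∧
      x ⟨t₀, le_refl t₀⟩ = x₀) :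
    ∀ α β : Fin m, G α ∘ G β = G β ∘ G α := by
  intro α β
  funext x₀
  obtain ⟨x, hrec, hx0⟩ := hex x₀
  have hcomm : stepv (stepv ⟨t₀, le_refl t₀⟩ α) β = stepv (stepv ⟨t₀, le_refl t₀⟩ β) α := by
    apply Subtype.ext
    show t₀ + Pi.single α 1 + Pi.single β 1 = t₀ + Pi.single β 1 + Pi.single α 1
    ring
  have h1 : x (stepv (stepv ⟨t₀, le_refl t₀⟩ α) β) = G β (G α x₀) := by
    rw [hrec, hrec, hx0]
  have h2 : x (stepv (stepv ⟨t₀, le_refl t₀⟩ β) α) = G α (G β x₀) := by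
    rw [hrec, hrec, hx0]
  simp only [Function.comp_apply]
  rw [← h1, ← h2, hcomm]
end

section
/- Let m ≥ 1 be an integer, M a nonempty set, G_α : M → M for α ∈ {1,…,m}, t₀ ∈ ℤ^m, and α₀ ∈ {1,…,m}. If for every x₀ ∈ M there exists at least one function x : {t ∈ ℤ^m | t ≥ t₀ − 1_{α₀}} → M satisfying x(t + 1_α) = G_α(x(t)) for all t ≥ t₀ − 1_{α₀} and all α ∈ {1,…,m}, and x(t₀) = x₀, then G_{α₀} is surjective and G_α ∘ G_β = G_β ∘ G_α for all α, β ∈ {1,…,m}. -/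
/-- Proposition 2 a). If for every `x₀ ∈ M` the recurrence
`x(t+1_α) = G_α(x(t))` on `{t ≥ t₀ − 1_{α₀}}` has at least one solution with
`x(t₀) = x₀`, then `G_{α₀}` is surjective and the maps `G_α` pairwise commute. -/
theorem stmt_4 {m : ℕ} (hm : 1 ≤ m) {M : Type*} [Nonempty M]
    (G : Fin m → M → M) (t₀ : Fin m → ℤ) (α₀ : Fin m)
    (hex : ∀ x₀ : M, ∃ x : {t : Fin m → ℤ // t₀ - Pi.single α₀ 1 ≤ t} → M,
      (∀ (t : {t : Fin m → ℤ // t₀ - Pi.single α₀ 1 ≤ t}) (α : Fin m),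
        x (stepv t α) = G α (x t)) ∧
      x ⟨t₀, sub_single_le t₀ α₀⟩ = x₀) :
    Function.Surjective (G α₀) ∧ ∀ α β : Fin m, G α ∘ G β = G β ∘ G α := by
  constructor
  · intro x₀
    obtain ⟨x, hrec, hval⟩ := hex x₀
    refine ⟨x ⟨t₀ - Pi.single α₀ 1, le_refl _⟩, ?_⟩
    rw [← hrec ⟨t₀ - Pi.single α₀ 1, le_refl _⟩ α₀]
    rw [← hval]
    congr 1
    simp [stepv]
  · intro α β
    funext y
    obtain ⟨x, hrec, hval⟩ := hex y
    have h1 : x (stepv (stepv ⟨t₀, sub_single_le t₀ α₀⟩ β) α) = G α (G β y) := by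
      rw [hrec, hrec, hval]
    have h2 : x (stepv (stepv ⟨t₀, sub_single_le t₀ α₀⟩ α) β) = G β (G α y) := by
      rw [hrec, hrec, hval]
    have heq : stepv (stepv ⟨t₀, sub_single_le t₀ α₀⟩ β) α
        = stepv (stepv ⟨t₀, sub_single_le t₀ α₀⟩ α) β := by
      simp only [stepv, Subtype.mk.injEq]
      ring
    simp only [Function.comp_apply]
    rw [← h1, heq, h2]
end

section
/- Let m ≥ 1 be an integer, M a nonempty set, and G_α : M → M for α ∈ {1,…,m} all surjective, with G_α ∘ G_β = G_β ∘ G_α for all α, β ∈ {1,…,m}. Then for every (t₀, x₀) ∈ ℤ^m × M there exists at least one function x : ℤ^m → M satisfying x(t + 1_α) = G_α(x(t)) for all t ∈ ℤ^m and all α ∈ {1,…,m}, and x(t₀) = x₀. -/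
open Function Multiplicative

theorem Function.Surjective.exists_backward_orbit {M : Type*} {f : M → M} (hf : Surjective f)
    (x : M) : ∃ z : ℕ → M, z 0 = x ∧ ∀ n, f (z (n + 1)) = z n := by
  obtain ⟨g, hg⟩ := hf.hasRightInverse
  refine ⟨fun n => g^[n] x, rfl, fun n => ?_⟩
  show f (g^[n + 1] x) = g^[n] x
  rw [iterate_succ_apply']
  exact hg _

theorem MonoidHom.ofAdd_add_apply {A M : Type*} [AddMonoid A]
    (act : Multiplicative A →* Function.End M) (a b : A) (x : M) :
    act (ofAdd (a + b)) x = act (ofAdd a) (act (ofAdd b) x) := by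
  rw [ofAdd_add, map_mul]
  rfl

section Extension

variable {ι M : Type*} (act : Multiplicative (ι → ℕ) →* Function.End M)

theorem apply_backwardOrbit_eq_of_le {z : ℕ → M} (hz : ∀ n, act (ofAdd 1) (z (n + 1)) = z n)
    {t₀ t : ι → ℤ} {n n' : ℕ} (hn : ∀ i, t₀ i ≤ t i + n) (hnn' : n ≤ n') :
    act (ofAdd fun i => (t i - t₀ i + n').toNat) (z n') =
      act (ofAdd fun i => (t i - t₀ i + n).toNat) (z n) := by
  induction n', hnn' using Nat.le_induction with
  | base => rfl
  | succ n' hnn' ih =>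
    have hsucc : (fun i => (t i - t₀ i + (n' + 1 : ℕ)).toNat) =
        (fun i => (t i - t₀ i + n').toNat) + 1 := by
      funext i
      have := hn i
      simp only [Pi.add_apply, Pi.one_apply]
      omega
    rw [hsucc, act.ofAdd_add_apply, hz, ih]

theorem exists_lattice_orbit_of_surjective [Fintype ι] (hsurj : Surjective (act (ofAdd 1)))
    (t₀ : ι → ℤ) (x₀ : M) :
    ∃ x : (ι → ℤ) → M,
      (∀ t (k : ι → ℕ), x (t + fun i => (k i : ℤ)) = act (ofAdd k) (x t)) ∧ x t₀ = x₀ := by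
  obtain ⟨z, hz₀, hz⟩ := hsurj.exists_backward_orbit x₀
  let N : (ι → ℤ) → ℕ := fun t => ∑ i, (t₀ i - t i).toNat
  have hN : ∀ t i, t₀ i ≤ t i + N t := fun t i => by
    have := Finset.single_le_sum (fun j _ => Nat.zero_le ((t₀ j - t j).toNat)) (Finset.mem_univ i)
    dsimp only [N]
    omega
  refine ⟨fun t => act (ofAdd fun i => (t i - t₀ i + N t).toNat) (z (N t)), fun t k => ?_, ?_⟩
  · have hN_le : N (t + fun i => (k i : ℤ)) ≤ N t :=
      Finset.sum_le_sum fun i _ => by simp only [Pi.add_apply]; omega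
    have hexp : (fun i => ((t + fun i => (k i : ℤ)) i - t₀ i + N t).toNat) =
        k + fun i => (t i - t₀ i + N t).toNat := by
      funext i
      have := hN t i
      simp only [Pi.add_apply]
      omega
    beta_reduce
    rw [← apply_backwardOrbit_eq_of_le act hz (hN _) hN_le, hexp, act.ofAdd_add_apply]
  · beta_reduce
    rw [apply_backwardOrbit_eq_of_le act hz (n := 0) (by simp) (Nat.zero_le _)]
    have hexp : (fun i => (t₀ i - t₀ i + ((0 : ℕ) : ℤ)).toNat) = 0 := by
      funext i
      simp
    rw [hexp, ofAdd_zero, map_one, hz₀]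
    rfl

end Extension

section CommutingFamily

variable {ι M : Type*} [Fintype ι] [DecidableEq ι] (G : ι → M → M)
  (hG : ∀ i j, G i ∘ G j = G j ∘ G i)

def multiIterateHom : Multiplicative (ι → ℕ) →* Function.End M :=
  (MonoidHom.noncommPiCoprod (fun i => powersHom (Function.End M) (G i))
    fun i j _ a b =>
      (show @Commute (Function.End M) _ (G i) (G j) from hG i j).pow_pow (toAdd a) (toAdd b)).comp
    (MulEquiv.piMultiplicative _).toMonoidHom

theorem multiIterateHom_ofAdd_single (i : ι) (n : ℕ) :
    @Eq (M → M) (multiIterateHom G hG (ofAdd (Pi.single i n))) (G i)^[n] := by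
  have hsingle : MulEquiv.piMultiplicative (fun _ => ℕ) (ofAdd (Pi.single i n)) =
      Pi.mulSingle i (ofAdd n) := by
    funext j
    by_cases h : j = i
    · subst h; simp
    · simp [h]
  rw [multiIterateHom, MonoidHom.comp_apply, MulEquiv.coe_toMonoidHom, hsingle]
  exact (MonoidHom.noncommPiCoprod_mulSingle (fun i => powersHom (Function.End M) (G i)) i
    (ofAdd n)).trans rfl

theorem surjective_multiIterateHom (hsurj : ∀ i, Surjective (G i)) (k : ι → ℕ) :
    Surjective (multiIterateHom G hG (ofAdd k)) := by
  induction k using Pi.single_induction with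
  | zero => rw [ofAdd_zero, map_one]; exact surjective_id
  | add k l hk hl =>
    rw [ofAdd_add, map_mul]
    exact hk.comp hl
  | single i n =>
    rw [multiIterateHom_ofAdd_single]
    exact (hsurj i).iterate n

end CommutingFamily

theorem stmt_6_general {m : ℕ} {M : Type*}
    (G : Fin m → M → M)
    (hsurj : ∀ α : Fin m, Function.Surjective (G α))
    (hcomm : ∀ α β : Fin m, G α ∘ G β = G β ∘ G α) :
    ∀ (t₀ : Fin m → ℤ) (x₀ : M),
      ∃ x : (Fin m → ℤ) → M,
        (∀ (t : Fin m → ℤ) (α : Fin m), x (t + Pi.single α 1) = G α (x t)) ∧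
        x t₀ = x₀ := by
  intro t₀ x₀
  obtain ⟨x, hx, hx₀⟩ := exists_lattice_orbit_of_surjective (multiIterateHom G hcomm)
    (surjective_multiIterateHom G hcomm hsurj 1) t₀ x₀
  refine ⟨x, fun t α => ?_, hx₀⟩
  have hcast : (fun i => ((Pi.single α 1 : Fin m → ℕ) i : ℤ)) = Pi.single α 1 :=
    funext (Pi.apply_single (fun _ (n : ℕ) => (n : ℤ)) (fun _ => Nat.cast_zero) α 1)
  rw [← hcast, hx, multiIterateHom_ofAdd_single, iterate_one]

/-- Proposition 2 c). If the maps `G_α` are surjective and pairwise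
commute, then for every `(t₀, x₀) ∈ ℤ^m × M` there exists at least one function
`x : ℤ^m → M` with `x(t+1_α) = G_α(x(t))` for all `t ∈ ℤ^m`, `α`, and `x(t₀) = x₀`. -/
theorem stmt_6 {m : ℕ} (hm : 1 ≤ m) {M : Type*} [Nonempty M]
    (G : Fin m → M → M)
    (hsurj : ∀ α : Fin m, Function.Surjective (G α))
    (hcomm : ∀ α β : Fin m, G α ∘ G β = G β ∘ G α) :
    ∀ (t₀ : Fin m → ℤ) (x₀ : M),
      ∃ x : (Fin m → ℤ) → M,
        (∀ (t : Fin m → ℤ) (α : Fin m), x (t + Pi.single α 1) = G α (x t)) ∧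
        x t₀ = x₀ :=
  stmt_6_general G hsurj hcomm
end

section
/- Let m ≥ 1 be an integer, M a nonempty set, and G_α : M → M for α ∈ {1,…,m} such that G_α ∘ G_β = G_β ∘ G_α for all α, β ∈ {1,…,m}. Let t₀ ∈ ℤ^m and α₀ ∈ {1,…,m}. If for every x₀ ∈ M there exists at most one function x : {t ∈ ℤ^m | t ≥ t₀ − 1_{α₀}} → M satisfying x(t + 1_α) = G_α(x(t)) for all t ≥ t₀ − 1_{α₀} and all α ∈ {1,…,m}, and x(t₀) = x₀, then G_{α₀} is injective. -/
section Aux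

variable {m : ℕ} {M : Type*} (G : Fin m → M → M)

private def foldIter (l : List (Fin m)) (k : Fin m → ℕ) : M → M :=
  l.foldr (fun α f => (G α)^[k α] ∘ f) id

private lemma foldIter_congr (l : List (Fin m)) {k k' : Fin m → ℕ}
    (h : ∀ α ∈ l, k α = k' α) : foldIter G l k = foldIter G l k' := by
  induction l with
  | nil => rfl
  | cons β l ih =>
    simp only [foldIter, List.foldr_cons] at *
    rw [h β (by simp), ih fun α hα => h α (by simp [hα])]

private lemma comm_iter (hcomm : ∀ α β : Fin m, G α ∘ G β = G β ∘ G α)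
    (α β : Fin m) (n : ℕ) : G α ∘ (G β)^[n] = (G β)^[n] ∘ G α := by
  induction n with
  | zero => rfl
  | succ n ih =>
    rw [Function.iterate_succ, ← Function.comp_assoc, ih,
      Function.comp_assoc, hcomm, ← Function.comp_assoc]

private lemma foldIter_update (hcomm : ∀ α β : Fin m, G α ∘ G β = G β ∘ G α)
    (l : List (Fin m)) (hl : l.Nodup) {α : Fin m} (hα : α ∈ l) (k : Fin m → ℕ) :
    foldIter G l (Function.update k α (k α + 1)) = G α ∘ foldIter G l k := by
  induction l with
  | nil => simp at hα
  | cons β l ih =>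
    rcases List.nodup_cons.mp hl with ⟨hβl, hl'⟩
    have hfold : ∀ k' : Fin m → ℕ, foldIter G (β :: l) k' =
        (G β)^[k' β] ∘ foldIter G l k' := fun _ => rfl
    by_cases hba : β = α
    · subst hba
      have h1 : foldIter G l (Function.update k β (k β + 1)) = foldIter G l k :=
        foldIter_congr G l fun γ hγ =>
          Function.update_of_ne (by rintro rfl; exact hβl hγ) _ _
      rw [hfold, hfold, Function.update_self, h1, Function.iterate_succ',
        Function.comp_assoc]
    · have hαl : α ∈ l := by
        rcases List.mem_cons.mp hα with h | h
        · exact absurd h.symm hba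
        · exact h
      rw [hfold, hfold, Function.update_of_ne hba _ _,
        ih hl' hαl, ← Function.comp_assoc, ← comm_iter G hcomm,
        Function.comp_assoc]

private lemma iterAll_update (hcomm : ∀ α β : Fin m, G α ∘ G β = G β ∘ G α)
    (α : Fin m) (k : Fin m → ℕ) :
    iterAll G (Function.update k α (k α + 1)) = G α ∘ iterAll G k :=
  foldIter_update G hcomm _ (List.nodup_finRange m) (List.mem_finRange α) k

private lemma iterAll_zero : iterAll G (fun _ => 0) = id := by
  unfold iterAll
  induction (List.finRange m) with
  | nil => rfl
  | cons β l ih => simp [ih]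

end Aux

/-- Proposition 3. Suppose the maps `G_α` pairwise commute. If for
every `x₀ ∈ M` there is at most one solution of `x(t+1_α) = G_α(x(t))` on
`{t ≥ t₀ − 1_{α₀}}` with `x(t₀) = x₀`, then `G_{α₀}` is injective. -/
theorem stmt_7 {m : ℕ} (hm : 1 ≤ m) {M : Type*} [Nonempty M]
    (G : Fin m → M → M)
    (hcomm : ∀ α β : Fin m, G α ∘ G β = G β ∘ G α)
    (t₀ : Fin m → ℤ) (α₀ : Fin m)
    (huniq : ∀ x₀ : M,
      ∀ x y : {t : Fin m → ℤ // t₀ - Pi.single α₀ 1 ≤ t} → M,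
        ((∀ (t : {t : Fin m → ℤ // t₀ - Pi.single α₀ 1 ≤ t}) (α : Fin m),
            x (stepv t α) = G α (x t)) ∧ x ⟨t₀, sub_single_le t₀ α₀⟩ = x₀) →
        ((∀ (t : {t : Fin m → ℤ // t₀ - Pi.single α₀ 1 ≤ t}) (α : Fin m),
            y (stepv t α) = G α (y t)) ∧ y ⟨t₀, sub_single_le t₀ α₀⟩ = x₀) →
        x = y) :
    Function.Injective (G α₀) := by
  intro a b hab
  set t₁ : Fin m → ℤ := t₀ - Pi.single α₀ 1 with ht₁
  set sol : M → {t : Fin m → ℤ // t₁ ≤ t} → M :=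
    fun c t => iterAll G (fun β => (t.1 β - t₁ β).toNat) c with hsol
  have hrec : ∀ c, ∀ (t : {t : Fin m → ℤ // t₁ ≤ t}) (α : Fin m),
      sol c (stepv t α) = G α (sol c t) := by
    intro c t α
    have hk : (fun β => ((stepv t α).1 β - t₁ β).toNat) =
        Function.update (fun β => (t.1 β - t₁ β).toNat) α
          ((t.1 α - t₁ α).toNat + 1) := by
      funext β
      by_cases hb : β = α
      · subst hb
        have h0 : (0:ℤ) ≤ t.1 β - t₁ β := sub_nonneg.mpr (t.2 β)
        simp only [stepv, Pi.add_apply, Pi.single_eq_same, Function.update_self]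
        rw [show t.1 β + 1 - t₁ β = (t.1 β - t₁ β) + 1 by ring,
          Int.toNat_add h0 (by norm_num)]
        rfl
      · simp [stepv, Pi.single_eq_of_ne hb, hb]
    simp only [hsol]
    rw [hk, iterAll_update G hcomm]
    rfl
  have hval : ∀ c, sol c ⟨t₀, sub_single_le t₀ α₀⟩ = G α₀ c := by
    intro c
    have hk : (fun β => (t₀ β - t₁ β).toNat) =
        Function.update (fun _ => 0) α₀ (0 + 1) := by
      funext β
      by_cases hb : β = α₀
      · subst hb; simp [ht₁]
      · simp [ht₁, Pi.single_eq_of_ne hb, hb]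
    simp only [hsol]
    rw [hk, iterAll_update G hcomm, iterAll_zero]
    rfl
  have := huniq (G α₀ a) (sol a) (sol b) ⟨hrec a, hval a⟩
    ⟨hrec b, by rw [hval b, hab]⟩
  have hbase := congrFun this ⟨t₁, le_refl t₁⟩
  simpa [hsol, iterAll_zero] using hbase
end

section
/- Let m ≥ 1 be an integer, M a nonempty set, and G_α : M → M for α ∈ {1,…,m}. The following six statements are equivalent: (i) every G_α is bijective and G_α ∘ G_β = G_β ∘ G_α for all α, β; (ii) there exists t₀ ∈ ℤ^m such that for every α₀ ∈ {1,…,m} and every x₀ ∈ M there is a unique function x : {t ≥ t₀ − 1_{α₀}} → M with x(t + 1_α) = G_α(x(t)) for all t ≥ t₀ − 1_{α₀} and all α, and x(t₀) = x₀; (iii) there exist t₀, t₁ ∈ ℤ^m with t₁^α < t₀^α for all α such that for every x₀ ∈ M there is a unique function x : {t ≥ t₁} → M with x(t + 1_α) = G_α(x(t)) for all t ≥ t₁ and all α, and x(t₀) = x₀; (iv) for all t₀, t₁ ∈ ℤ^m with t₁ ≤ t₀ and every x₀ ∈ M there is a unique function x : {t ≥ t₁} → M with x(t + 1_α) = G_α(x(t))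 for all t ≥ t₁ and all α, and x(t₀) = x₀; (v) there exists t₀ ∈ ℤ^m such that for every x₀ ∈ M there is a unique function x : ℤ^m → M with x(t + 1_α) = G_α(x(t)) for all t ∈ ℤ^m and all α, and x(t₀) = x₀; (vi) for every (t₀, x₀) ∈ ℤ^m × M there is a unique function x : ℤ^m → M with x(t + 1_α) = G_α(x(t)) for all t ∈ ℤ^m and all α, and x(t₀) = x₀. -/
/-!
Under (i) the commuting bijections `G_α` generate an action `s ↦ G^s` of `ℤ^m` on `M`, and
`t ↦ G^(t - t₀) x₀` is a global solution through `(t₀, x₀)`. On a quadrant, two solutions that agree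
at one point agree at its join with any other point, and injectivity of the `G_α` carries the
agreement back down; this gives uniqueness. Conversely, if the solutions through a point `t₀` exist
and are unique, the two paths to `t₀ + 1_α + 1_β` give commutativity, `x (t₀ - 1_α)` is a preimage
under `G_α`, and uniqueness applied to the shifted solution `x (· + 1_α)` gives injectivity; this
needs `t₀ - 1_α` in the domain, whence the strict inequality in (iii) and the enlarged quadrant
in (ii).
-/

open Function

section Recurrence

variable {ι D M : Type*}

/-- `D` stands for `ℤ^m` or a quadrant `{t ≥ t₁}`, with the commuting shifts `σ_α = (· + 1_α)`. -/
def IsSolution (σ : ι → D → D) (G : ι → M → M) (x : D → M) : Prop :=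
  ∀ t α, x (σ α t) = G α (x t)

variable {σ : ι → D → D} {G : ι → M → M}

theorem IsSolution.comp_shift (hσ : ∀ α β t, σ α (σ β t) = σ β (σ α t)) {x : D → M}
    (hx : IsSolution σ G x) (α : ι) : IsSolution σ G (x ∘ σ α) := fun t β => by
  rw [comp_apply, comp_apply, hσ, hx]

theorem comp_comm_of_forall_exists_isSolution (hσ : ∀ α β t, σ α (σ β t) = σ β (σ α t))
    (t₀ : D) (H : ∀ x₀, ∃ x, IsSolution σ G x ∧ x t₀ = x₀) (α β : ι) :
    G α ∘ G β = G β ∘ G α := by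
  funext x₀
  obtain ⟨x, hx, rfl⟩ := H x₀
  rw [comp_apply, comp_apply, ← hx, ← hx, ← hx, ← hx, hσ]

theorem surjective_of_forall_exists_isSolution {t₀ p : D} {α : ι}
    (H : ∀ x₀, ∃ x, IsSolution σ G x ∧ x t₀ = x₀) (hp : σ α p = t₀) : Surjective (G α) :=
  fun x₀ => by
    obtain ⟨x, hx, rfl⟩ := H x₀
    exact ⟨x p, by rw [← hx, hp]⟩

theorem injective_of_forall_existsUnique_isSolution
    (hσ : ∀ α β t, σ α (σ β t) = σ β (σ α t)) {t₀ p : D} {α : ι}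
    (H : ∀ x₀, ∃! x, IsSolution σ G x ∧ x t₀ = x₀) (hp : σ α p = t₀) : Injective (G α) := by
  intro a b hab
  obtain ⟨x, hx, rfl⟩ := (H a).exists
  obtain ⟨y, hy, rfl⟩ := (H b).exists
  have hxy : x ∘ σ α = y ∘ σ α :=
    (H (G α (x t₀))).unique ⟨hx.comp_shift hσ α, hx t₀ α⟩
      ⟨hy.comp_shift hσ α, (hy t₀ α).trans hab.symm⟩
  simpa only [comp_apply, hp] using congrFun hxy p

end Recurrence

section Lattice

variable {ι M : Type*} [DecidableEq ι]

abbrev IsGlobalSolution (G : ι → M → M) : ((ι → ℤ) → M) → Prop :=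
  IsSolution (fun α t => t + Pi.single α 1) G

theorem le_sub_single_one {t u : ι → ℤ} {α : ι} (hu : t ≤ u) (hα : t α < u α) :
    t ≤ u - Pi.single α 1 := fun β => by
  by_cases hβ : β = α
  · subst hβ
    simpa [Int.le_sub_one_iff] using hα
  · simpa [hβ] using hu β

theorem pi_int_le_induction [Fintype ι] {t : ι → ℤ} {P : (ι → ℤ) → Prop} (h₀ : P t)
    (hstep : ∀ s α, t ≤ s → P s → P (s + Pi.single α 1)) {u : ι → ℤ} (hu : t ≤ u) : P u := by
  obtain ⟨n, hn⟩ := Int.eq_ofNat_of_zero_le (Finset.sum_nonneg fun α _ => sub_nonneg.2 (hu α))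
  induction n generalizing u with
  | zero =>
    have hzero := (Finset.sum_eq_zero_iff_of_nonneg fun β _ => sub_nonneg.2 (hu β)).1 hn
    obtain rfl : u = t := funext fun α => by linarith [hzero α (Finset.mem_univ α)]
    exact h₀
  | succ n ih =>
    obtain ⟨α, hα⟩ : ∃ α, t α < u α := by
      by_contra! h
      have : ∑ α, (u α - t α) = 0 := Finset.sum_eq_zero fun α _ => by linarith [h α, hu α]
      omega
    have hle := le_sub_single_one hu hα
    have hsum : ∑ β, ((u - Pi.single α 1 : ι → ℤ) β - t β) = n := by
      simp [Finset.sum_sub_distrib] at hn ⊢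
      omega
    simpa using hstep _ α hle (ih hle hsum)

theorem exists_isGlobalSolution [Fintype ι] {G : ι → M → M} (hbij : ∀ α, Bijective (G α))
    (hcomm : ∀ α β, G α ∘ G β = G β ∘ G α) (t₀ : ι → ℤ) (x₀ : M) :
    ∃ x, IsGlobalSolution G x ∧ x t₀ = x₀ := by
  let e : ι → Equiv.Perm M := fun α => Equiv.ofBijective (G α) (hbij α)
  have he : ∀ α β, Commute (e α) (e β) := fun α β => Equiv.ext (congrFun (hcomm α β))
  let φ : (ι → Multiplicative ℤ) →* Equiv.Perm M :=
    MonoidHom.noncommPiCoprod (fun α => zpowersHom _ (e α))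
      fun α β _ _ _ => (he α β).zpow_zpow _ _
  have hφ : ∀ α, φ (Pi.mulSingle α (Multiplicative.ofAdd 1)) = e α := fun α =>
    (MonoidHom.noncommPiCoprod_mulSingle _ _ _).trans (by simp [e])
  let ofAdd' : (ι → ℤ) → ι → Multiplicative ℤ := fun s β => Multiplicative.ofAdd (s β)
  have hofAdd' : ∀ (s : ι → ℤ) (α : ι),
      ofAdd' (s + Pi.single α 1) = Pi.mulSingle α (Multiplicative.ofAdd 1) * ofAdd' s := by
    intro s α
    funext β
    by_cases hβ : β = α
    · subst hβ
      simp [ofAdd', mul_comm]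
    · simp [ofAdd', hβ]
  refine ⟨fun t => φ (ofAdd' (t - t₀)) x₀, fun t α => ?_, ?_⟩
  · simp only [add_sub_right_comm t, hofAdd', map_mul, Equiv.Perm.mul_apply, hφ]
    rfl
  · simp only [sub_self]
    exact congrArg (· x₀) (map_one φ)

end Lattice

section Quadrant

variable {m : ℕ} {M : Type*} {G : Fin m → M → M}

abbrev IsQuadrantSolution (G : Fin m → M → M) (t₁ : Fin m → ℤ) :
    ({t : Fin m → ℤ // t₁ ≤ t} → M) → Prop :=
  IsSolution (fun α t => stepv t α) G

theorem stepv_stepv_comm {t₁ : Fin m → ℤ} (α β : Fin m) (t : {t : Fin m → ℤ // t₁ ≤ t}) :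
    stepv (stepv t β) α = stepv (stepv t α) β :=
  Subtype.ext (add_right_comm _ _ _)

theorem IsGlobalSolution.restrict {x : (Fin m → ℤ) → M} (hx : IsGlobalSolution G x)
    (t₁ : Fin m → ℤ) : IsQuadrantSolution G t₁ fun t => x t.1 :=
  fun t α => hx t.1 α

variable {t₁ : Fin m → ℤ} {x y : {t : Fin m → ℤ // t₁ ≤ t} → M}

theorem IsQuadrantSolution.eq_iff_eq_of_le (hinj : ∀ α, Injective (G α))
    (hx : IsQuadrantSolution G t₁ x) (hy : IsQuadrantSolution G t₁ y)
    {s v : {t : Fin m → ℤ // t₁ ≤ t}} (hsv : s.1 ≤ v.1) : x s = y s ↔ x v = y v := by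
  refine pi_int_le_induction (P := fun w => ∀ hw : t₁ ≤ w, x s = y s ↔ x ⟨w, hw⟩ = y ⟨w, hw⟩)
    (fun _ => Iff.rfl) (fun w α hsw ih _ => ?_) hsv v.2
  change x s = y s ↔ x (stepv ⟨w, s.2.trans hsw⟩ α) = y (stepv ⟨w, s.2.trans hsw⟩ α)
  rw [hx, hy, (hinj α).eq_iff]
  exact ih _

theorem IsQuadrantSolution.eq_of_apply_eq (hinj : ∀ α, Injective (G α))
    (hx : IsQuadrantSolution G t₁ x) (hy : IsQuadrantSolution G t₁ y)
    {t₀ : {t : Fin m → ℤ // t₁ ≤ t}} (h : x t₀ = y t₀) : x = y := by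
  funext t
  let u : {t : Fin m → ℤ // t₁ ≤ t} := ⟨t.1 ⊔ t₀.1, le_sup_of_le_left t.2⟩
  exact (hx.eq_iff_eq_of_le hinj hy (v := u) le_sup_left).2
    ((hx.eq_iff_eq_of_le hinj hy (v := u) le_sup_right).1 h)

theorem existsUnique_isQuadrantSolution (hbij : ∀ α, Bijective (G α))
    (hcomm : ∀ α β, G α ∘ G β = G β ∘ G α) {t₀ : Fin m → ℤ} (h : t₁ ≤ t₀) (x₀ : M) :
    ∃! x, IsQuadrantSolution G t₁ x ∧ x ⟨t₀, h⟩ = x₀ := by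
  obtain ⟨x, hx, hx₀⟩ := exists_isGlobalSolution hbij hcomm t₀ x₀
  exact ⟨_, ⟨hx.restrict t₁, hx₀⟩, fun y ⟨hy, hy₀⟩ =>
    hy.eq_of_apply_eq (fun α => (hbij α).1) (hx.restrict t₁) (hy₀.trans hx₀.symm)⟩

theorem existsUnique_isGlobalSolution (hbij : ∀ α, Bijective (G α))
    (hcomm : ∀ α β, G α ∘ G β = G β ∘ G α) (t₀ : Fin m → ℤ) (x₀ : M) :
    ∃! x, IsGlobalSolution G x ∧ x t₀ = x₀ := by
  obtain ⟨x, hx, hx₀⟩ := exists_isGlobalSolution hbij hcomm t₀ x₀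
  refine ⟨x, ⟨hx, hx₀⟩, fun y ⟨hy, hy₀⟩ => funext fun t => ?_⟩
  have := (hy.restrict (t ⊓ t₀)).eq_of_apply_eq (fun α => (hbij α).1) (hx.restrict _)
    (t₀ := ⟨t₀, inf_le_right⟩) (hy₀.trans hx₀.symm)
  exact congrFun this ⟨t, inf_le_left⟩

theorem bijective_of_existsUnique_isQuadrantSolution {t₀ : Fin m → ℤ} (h : t₁ ≤ t₀)
    (H : ∀ x₀, ∃! x, IsQuadrantSolution G t₁ x ∧ x ⟨t₀, h⟩ = x₀) {α : Fin m}
    (hα : t₁ α < t₀ α) : Bijective (G α) :=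
  have hp : stepv ⟨t₀ - Pi.single α 1, le_sub_single_one h hα⟩ α = ⟨t₀, h⟩ :=
    Subtype.ext (sub_add_cancel _ _)
  ⟨injective_of_forall_existsUnique_isSolution stepv_stepv_comm H hp,
    surjective_of_forall_exists_isSolution (fun x₀ => (H x₀).exists) hp⟩

theorem bijective_of_existsUnique_isGlobalSolution {t₀ : Fin m → ℤ}
    (H : ∀ x₀, ∃! x, IsGlobalSolution G x ∧ x t₀ = x₀) (α : Fin m) : Bijective (G α) :=
  have hp : t₀ - Pi.single α 1 + Pi.single α 1 = t₀ := sub_add_cancel _ _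
  ⟨injective_of_forall_existsUnique_isSolution (fun _ _ _ => add_right_comm _ _ _) H hp,
    surjective_of_forall_exists_isSolution (fun x₀ => (H x₀).exists) hp⟩

end Quadrant

theorem stmt_9_general {m : ℕ} {M : Type*}
    (G : Fin m → M → M) :
    List.TFAE
      [ -- (i) each `G_α` is bijective and they pairwise commute
        (∀ α : Fin m, Function.Bijective (G α)) ∧
          (∀ α β : Fin m, G α ∘ G β = G β ∘ G α),
        -- (ii)
        ∃ t₀ : Fin m → ℤ, ∀ (α₀ : Fin m) (x₀ : M),
          ∃! x : {t : Fin m → ℤ // t₀ - Pi.single α₀ 1 ≤ t} → M,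
            (∀ (t : {t : Fin m → ℤ // t₀ - Pi.single α₀ 1 ≤ t}) (α : Fin m),
              x (stepv t α) = G α (x t)) ∧
            x ⟨t₀, sub_single_le t₀ α₀⟩ = x₀,
        -- (iii)
        ∃ (t₀ t₁ : Fin m → ℤ) (hlt : ∀ α : Fin m, t₁ α < t₀ α), ∀ x₀ : M,
          ∃! x : {t : Fin m → ℤ // t₁ ≤ t} → M,
            (∀ (t : {t : Fin m → ℤ // t₁ ≤ t}) (α : Fin m),
              x (stepv t α) = G α (x t)) ∧
            x ⟨t₀, fun α => (hlt α).le⟩ = x₀,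
        -- (iv)
        ∀ (t₀ t₁ : Fin m → ℤ) (h : t₁ ≤ t₀) (x₀ : M),
          ∃! x : {t : Fin m → ℤ // t₁ ≤ t} → M,
            (∀ (t : {t : Fin m → ℤ // t₁ ≤ t}) (α : Fin m),
              x (stepv t α) = G α (x t)) ∧
            x ⟨t₀, h⟩ = x₀,
        -- (v)
        ∃ t₀ : Fin m → ℤ, ∀ x₀ : M,
          ∃! x : (Fin m → ℤ) → M,
            (∀ (t : Fin m → ℤ) (α : Fin m), x (t + Pi.single α 1) = G α (x t)) ∧
            x t₀ = x₀,
        -- (vi)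
        ∀ (t₀ : Fin m → ℤ) (x₀ : M),
          ∃! x : (Fin m → ℤ) → M,
            (∀ (t : Fin m → ℤ) (α : Fin m), x (t + Pi.single α 1) = G α (x t)) ∧
            x t₀ = x₀ ] := by
  tfae_have 1 → 4 := fun ⟨hbij, hcomm⟩ _ _ h => existsUnique_isQuadrantSolution hbij hcomm h
  tfae_have 4 → 2 := fun h4 => ⟨0, fun α₀ => h4 0 _ (sub_single_le 0 α₀)⟩
  tfae_have 2 → 1 := fun ⟨_, H⟩ =>
    ⟨fun α => bijective_of_existsUnique_isQuadrantSolution _ (H α) (by simp),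
      fun α => comp_comm_of_forall_exists_isSolution stepv_stepv_comm _
        (fun x₀ => (H α x₀).exists) α⟩
  tfae_have 4 → 3 := fun h4 => ⟨0, -1, fun _ => by simp, h4 0 (-1) _⟩
  tfae_have 3 → 1 := fun ⟨_, _, hlt, H⟩ =>
    ⟨fun α => bijective_of_existsUnique_isQuadrantSolution _ H (hlt α),
      comp_comm_of_forall_exists_isSolution stepv_stepv_comm _ fun x₀ => (H x₀).exists⟩
  tfae_have 1 → 6 := fun ⟨hbij, hcomm⟩ => existsUnique_isGlobalSolution hbij hcomm
  tfae_have 6 → 5 := fun h6 => ⟨0, h6 0⟩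
  tfae_have 5 → 1 := fun ⟨_, H⟩ =>
    ⟨bijective_of_existsUnique_isGlobalSolution H,
      comp_comm_of_forall_exists_isSolution (fun _ _ _ => add_right_comm _ _ _) _
        fun x₀ => (H x₀).exists⟩
  tfae_finish

/-- Theorem 3. For maps `G_α : M → M`, the six statements about the
autonomous recurrence `x(t+1_α) = G_α(x(t))` are equivalent. -/
theorem stmt_9 {m : ℕ} (hm : 1 ≤ m) {M : Type*} [Nonempty M]
    (G : Fin m → M → M) :
    List.TFAE
      [ -- (i) each `G_α` is bijective and they pairwise commute
        (∀ α : Fin m, Function.Bijective (G α)) ∧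
          (∀ α β : Fin m, G α ∘ G β = G β ∘ G α),
        -- (ii)
        ∃ t₀ : Fin m → ℤ, ∀ (α₀ : Fin m) (x₀ : M),
          ∃! x : {t : Fin m → ℤ // t₀ - Pi.single α₀ 1 ≤ t} → M,
            (∀ (t : {t : Fin m → ℤ // t₀ - Pi.single α₀ 1 ≤ t}) (α : Fin m),
              x (stepv t α) = G α (x t)) ∧
            x ⟨t₀, sub_single_le t₀ α₀⟩ = x₀,
        -- (iii)
        ∃ (t₀ t₁ : Fin m → ℤ) (hlt : ∀ α : Fin m, t₁ α < t₀ α), ∀ x₀ : M,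
          ∃! x : {t : Fin m → ℤ // t₁ ≤ t} → M,
            (∀ (t : {t : Fin m → ℤ // t₁ ≤ t}) (α : Fin m),
              x (stepv t α) = G α (x t)) ∧
            x ⟨t₀, fun α => (hlt α).le⟩ = x₀,
        -- (iv)
        ∀ (t₀ t₁ : Fin m → ℤ) (h : t₁ ≤ t₀) (x₀ : M),
          ∃! x : {t : Fin m → ℤ // t₁ ≤ t} → M,
            (∀ (t : {t : Fin m → ℤ // t₁ ≤ t}) (α : Fin m),
              x (stepv t α) = G α (x t)) ∧
            x ⟨t₀, h⟩ = x₀,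
        -- (v)
        ∃ t₀ : Fin m → ℤ, ∀ x₀ : M,
          ∃! x : (Fin m → ℤ) → M,
            (∀ (t : Fin m → ℤ) (α : Fin m), x (t + Pi.single α 1) = G α (x t)) ∧
            x t₀ = x₀,
        -- (vi)
        ∀ (t₀ : Fin m → ℤ) (x₀ : M),
          ∃! x : (Fin m → ℤ) → M,
            (∀ (t : Fin m → ℤ) (α : Fin m), x (t + Pi.single α 1) = G α (x t)) ∧
            x t₀ = x₀ ] :=
  stmt_9_general G
end

section
/- Let m ≥ 1 be an integer, M a nonempty set, t₀ ∈ ℤ^m, and F_α : {t ∈ ℤ^m | t ≥ t₀} × M → M for α ∈ {1,…,m} such that F_α(t + 1_β, F_β(t, x)) = F_β(t + 1_α, F_α(t, x)) for all t ≥ t₀, all x ∈ M, and all α, β ∈ {1,…,m}. Then for every x₀ ∈ M there exists a unique function x : {t ∈ ℤ^m | t ≥ t₀} → M satisfying x(t + 1_α) = F_α(t, x(t)) for all t ≥ t₀ and all α ∈ {1,…,m}, and x(t₀) = x₀. -/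
namespace Stmt14Aux

variable {m : ℕ} {M : Type*}

theorem prev_mem {t₀ : Fin m → ℤ} {t : {t : Fin m → ℤ // t₀ ≤ t}} {α : Fin m}
    (hα : t₀ α < t.1 α) : t₀ ≤ t.1 - Pi.single α 1 := by
  intro β
  have h2 : t₀ β ≤ t.1 β := t.2 β
  by_cases hb : β = α
  · subst hb; simp only [Pi.sub_apply, Pi.single_apply, if_pos rfl]; omega
  · simp only [Pi.sub_apply, Pi.single_apply, if_neg hb]; omega

def Nsum (t₀ : Fin m → ℤ) (t : {t : Fin m → ℤ // t₀ ≤ t}) : ℕ :=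
  ∑ α, (t.1 α - t₀ α).toNat

theorem nsum_lt {t₀ : Fin m → ℤ} (t : {t : Fin m → ℤ // t₀ ≤ t}) {α : Fin m}
    (hα : t₀ α < t.1 α) :
    Nsum t₀ ⟨t.1 - Pi.single α 1, prev_mem hα⟩ < Nsum t₀ t := by
  unfold Nsum
  apply Finset.sum_lt_sum
  · intro i _
    by_cases h : i = α
    · subst h; simp only [Pi.sub_apply, Pi.single_apply, if_pos rfl]; omega
    · simp [Pi.single_apply, h]
  · exact ⟨α, Finset.mem_univ α, by simp [Pi.single_apply]; omega⟩

theorem nsum_pos {t₀ : Fin m → ℤ} (t : {t : Fin m → ℤ // t₀ ≤ t}) {α : Fin m}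
    (hα : t₀ α < t.1 α) : 0 < Nsum t₀ t := by
  unfold Nsum
  exact lt_of_lt_of_le (by omega : 0 < (t.1 α - t₀ α).toNat)
    (Finset.single_le_sum (f := fun β => (t.1 β - t₀ β).toNat)
      (fun i _ => Nat.zero_le _) (Finset.mem_univ α))

noncomputable def sol (t₀ : Fin m → ℤ) (F : Fin m → {t : Fin m → ℤ // t₀ ≤ t} → M → M)
    (x₀ : M) (t : {t : Fin m → ℤ // t₀ ≤ t}) : M :=
  if h : ∃ α, t₀ α < t.1 α then
    F h.choose ⟨t.1 - Pi.single h.choose 1, prev_mem h.choose_spec⟩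
      (sol t₀ F x₀ ⟨t.1 - Pi.single h.choose 1, prev_mem h.choose_spec⟩)
  else x₀
termination_by Nsum t₀ t
decreasing_by exact nsum_lt t h.choose_spec

theorem sol_init {t₀ : Fin m → ℤ} {F : Fin m → {t : Fin m → ℤ // t₀ ≤ t} → M → M}
    {x₀ : M} : sol t₀ F x₀ ⟨t₀, le_refl t₀⟩ = x₀ := by
  rw [sol, dif_neg]
  rintro ⟨α, h⟩
  exact lt_irrefl _ h

theorem sol_step {t₀ : Fin m → ℤ} {F : Fin m → {t : Fin m → ℤ // t₀ ≤ t} → M → M}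
    {x₀ : M}
    (hcomm : ∀ (t : {t : Fin m → ℤ // t₀ ≤ t}) (x : M) (α β : Fin m),
      F α (stepv t β) (F β t x) = F β (stepv t α) (F α t x))
    (t : {t : Fin m → ℤ // t₀ ≤ t}) (α : Fin m) :
    sol t₀ F x₀ (stepv t α) = F α t (sol t₀ F x₀ t) := by
  have key : ∀ n (t : {t : Fin m → ℤ // t₀ ≤ t}) (α : Fin m), Nsum t₀ t ≤ n →
      sol t₀ F x₀ (stepv t α) = F α t (sol t₀ F x₀ t) := by
    intro n
    induction n using Nat.strong_induction_on with
    | _ n ih =>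
      intro t α hn
      have hs : ∃ β, t₀ β < (stepv t α).1 β := by
        refine ⟨α, ?_⟩
        have h2 : t₀ α ≤ t.1 α := t.2 α
        simp [stepv, Pi.single_apply]
        omega
      conv_lhs => rw [sol]
      rw [dif_pos hs]
      have hβ : t₀ hs.choose < (stepv t α).1 hs.choose := hs.choose_spec
      by_cases hab : hs.choose = α
      · have ht : (⟨(stepv t α).1 - Pi.single hs.choose 1, prev_mem hβ⟩ :
            {t : Fin m → ℤ // t₀ ≤ t}) = t := by
          apply Subtype.ext
          show t.1 + Pi.single α 1 - Pi.single hs.choose 1 = t.1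
          rw [hab]; ring
        rw [ht, hab]
      · have hβt : t₀ hs.choose < t.1 hs.choose := by
          have : (stepv t α).1 hs.choose = t.1 hs.choose := by
            show (t.1 + Pi.single α 1 : Fin m → ℤ) hs.choose = t.1 hs.choose
            rw [Pi.add_apply, Pi.single_apply, if_neg hab, add_zero]
          omega
        have hnu : Nsum t₀ (⟨t.1 - Pi.single hs.choose 1, prev_mem hβt⟩ :
            {t : Fin m → ℤ // t₀ ≤ t}) < n :=
          lt_of_lt_of_le (nsum_lt t hβt) hn
        set u : {t : Fin m → ℤ // t₀ ≤ t} := ⟨t.1 - Pi.single hs.choose 1, prev_mem hβt⟩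
          with hu
        have e1 : (⟨(stepv t α).1 - Pi.single hs.choose 1, prev_mem hβ⟩ :
            {t : Fin m → ℤ // t₀ ≤ t}) = stepv u α := by
          apply Subtype.ext
          show t.1 + Pi.single α 1 - Pi.single hs.choose 1
              = t.1 - Pi.single hs.choose 1 + Pi.single α 1
          ring
        have e2 : stepv u hs.choose = t := by
          apply Subtype.ext
          show t.1 - Pi.single hs.choose 1 + Pi.single hs.choose 1 = t.1
          ring
        rw [e1, ih _ hnu u α le_rfl, hcomm u (sol t₀ F x₀ u) hs.choose α,
          ← ih _ hnu u hs.choose le_rfl, e2]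
  exact key (Nsum t₀ t) t α le_rfl

theorem eq_sol {t₀ : Fin m → ℤ} {F : Fin m → {t : Fin m → ℤ // t₀ ≤ t} → M → M}
    {x₀ : M}
    (hcomm : ∀ (t : {t : Fin m → ℤ // t₀ ≤ t}) (x : M) (α β : Fin m),
      F α (stepv t β) (F β t x) = F β (stepv t α) (F α t x))
    (y : {t : Fin m → ℤ // t₀ ≤ t} → M)
    (hy : ∀ (t : {t : Fin m → ℤ // t₀ ≤ t}) (α : Fin m), y (stepv t α) = F α t (y t))
    (hy0 : y ⟨t₀, le_refl t₀⟩ = x₀) : y = sol t₀ F x₀ := by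
  funext t
  have key : ∀ n (t : {t : Fin m → ℤ // t₀ ≤ t}), Nsum t₀ t ≤ n →
      y t = sol t₀ F x₀ t := by
    intro n
    induction n using Nat.strong_induction_on with
    | _ n ih =>
      intro t hn
      by_cases h : ∃ α, t₀ α < t.1 α
      · obtain ⟨α, hα⟩ := h
        set u : {t : Fin m → ℤ // t₀ ≤ t} := ⟨t.1 - Pi.single α 1, prev_mem hα⟩ with hu
        have e : stepv u α = t := by
          apply Subtype.ext
          show t.1 - Pi.single α 1 + Pi.single α 1 = t.1
          ring
        have hnu : Nsum t₀ u < n := lt_of_lt_of_le (nsum_lt t hα) hn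
        rw [← e, hy u α, sol_step hcomm u α, ih _ hnu u le_rfl]
      · push_neg at h
        have : t = ⟨t₀, le_refl t₀⟩ := Subtype.ext (le_antisymm (fun β => h β) t.2)
        rw [this, hy0, sol_init]
  exact key (Nsum t₀ t) t le_rfl

end Stmt14Aux

/-- Theorem 4. If the compatibility conditions
`F_α(t+1_β, F_β(t,x)) = F_β(t+1_α, F_α(t,x))` hold for all `t ≥ t₀`, `x ∈ M`,
`α, β`, then for every `x₀ ∈ M` the non-autonomous recurrence
`x(t+1_α) = F_α(t, x(t))` on `{t ≥ t₀}` with `x(t₀) = x₀` has a unique solution. -/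
theorem stmt_14 {m : ℕ} (hm : 1 ≤ m) {M : Type*} [Nonempty M]
    (t₀ : Fin m → ℤ)
    (F : Fin m → {t : Fin m → ℤ // t₀ ≤ t} → M → M)
    (hcomm : ∀ (t : {t : Fin m → ℤ // t₀ ≤ t}) (x : M) (α β : Fin m),
      F α (stepv t β) (F β t x) = F β (stepv t α) (F α t x)) :
    ∀ x₀ : M,
      ∃! x : {t : Fin m → ℤ // t₀ ≤ t} → M,
        (∀ (t : {t : Fin m → ℤ // t₀ ≤ t}) (α : Fin m),
          x (stepv t α) = F α t (x t)) ∧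
        x ⟨t₀, le_refl t₀⟩ = x₀ := by
  intro x₀
  exact ⟨Stmt14Aux.sol t₀ F x₀,
    ⟨fun t α => Stmt14Aux.sol_step hcomm t α, Stmt14Aux.sol_init⟩,
    fun y ⟨h1, h2⟩ => Stmt14Aux.eq_sol hcomm y h1 h2⟩
end

section
/- Let m ≥ 1 be an integer, M a nonempty set, t₀ ∈ ℤ^m, α₀ ∈ {1,…,m}, and F_α : {t ∈ ℤ^m | t ≥ t₀ − 1_{α₀}} × M → M for α ∈ {1,…,m} satisfying F_α(t + 1_β, F_β(t, x)) = F_β(t + 1_α, F_α(t, x)) for all t ≥ t₀ − 1_{α₀}, all x ∈ M, and all α, β ∈ {1,…,m}. If for every x₀ ∈ M there exists at most one function x : {t ∈ ℤ^m | t ≥ t₀ − 1_{α₀}} → M satisfying x(t + 1_α) = F_α(t, x(t)) for all t ≥ t₀ − 1_{α₀} and all α ∈ {1,…,m}, and x(t₀) = x₀, then the function F_{α₀}(t₀ − 1_{α₀}, ·) : M → M is injective. -/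
section Aux

variable {m : ℕ} {M : Type*} {t₁ : Fin m → ℤ}

theorem pred_mem {t : Fin m → ℤ} (ht : t₁ ≤ t) {α : Fin m} (hα : t₁ α < t α) :
    t₁ ≤ t - Pi.single α 1 := by
  intro β
  by_cases hb : β = α
  · subst hb; simp only [Pi.sub_apply, Pi.single_eq_same]; omega
  · simp only [Pi.sub_apply, Pi.single_apply, if_neg hb, sub_zero]; exact ht β

def Nsum (t₁ t : Fin m → ℤ) : ℕ := ∑ β, (t β - t₁ β).toNat

theorem nsum_step {t : Fin m → ℤ} (ht : t₁ ≤ t) (α : Fin m) :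
    Nsum t₁ (t + Pi.single α 1) = Nsum t₁ t + 1 := by
  unfold Nsum
  have key : ∀ β : Fin m, (t β + (Pi.single α 1 : Fin m → ℤ) β - t₁ β).toNat
      = (t β - t₁ β).toNat + if β = α then 1 else 0 := by
    intro β
    have hle : t₁ β ≤ t β := ht β
    by_cases hb : β = α
    · subst hb; rw [Pi.single_eq_same, if_pos rfl]; omega
    · rw [Pi.single_apply, if_neg hb, if_neg hb]; omega
  calc ∑ β, ((t + Pi.single α 1 : Fin m → ℤ) β - t₁ β).toNat
      = ∑ β, ((t β - t₁ β).toNat + if β = α then 1 else 0) :=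
        Finset.sum_congr rfl (fun β _ => by rw [Pi.add_apply]; exact key β)
    _ = (∑ β, (t β - t₁ β).toNat) + 1 := by
        rw [Finset.sum_add_distrib, Finset.sum_ite_eq' Finset.univ α (fun _ => 1)]
        simp

theorem nsum_pred {t : Fin m → ℤ} (ht : t₁ ≤ t) {α : Fin m} (hα : t₁ α < t α) :
    Nsum t₁ t = Nsum t₁ (t - Pi.single α 1) + 1 := by
  have h := nsum_step (pred_mem ht hα) α
  rwa [sub_add_cancel] at h

noncomputable def solAux (F : Fin m → {t : Fin m → ℤ // t₁ ≤ t} → M → M) (a : M) :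
    ℕ → {t : Fin m → ℤ // t₁ ≤ t} → M
  | 0, _ => a
  | n+1, t =>
    if h : ∃ α, t₁ α < t.1 α then
      F (Classical.choose h)
        ⟨t.1 - Pi.single (Classical.choose h) 1, pred_mem t.2 (Classical.choose_spec h)⟩
        (solAux F a n ⟨t.1 - Pi.single (Classical.choose h) 1,
          pred_mem t.2 (Classical.choose_spec h)⟩)
    else a

noncomputable def sol (F : Fin m → {t : Fin m → ℤ // t₁ ≤ t} → M → M) (a : M)
    (t : {t : Fin m → ℤ // t₁ ≤ t}) : M := solAux F a (Nsum t₁ t.1) t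

theorem sol_base (F : Fin m → {t : Fin m → ℤ // t₁ ≤ t} → M → M) (a : M) :
    sol F a ⟨t₁, le_refl _⟩ = a := by
  have : Nsum t₁ t₁ = 0 := by unfold Nsum; simp
  rw [sol, this, solAux]

theorem sol_step (F : Fin m → {t : Fin m → ℤ // t₁ ≤ t} → M → M)
    (hcomm : ∀ (t : {t : Fin m → ℤ // t₁ ≤ t}) (x : M) (α β : Fin m),
      F α (stepv t β) (F β t x) = F β (stepv t α) (F α t x))
    (a : M) :
    ∀ (t : {t : Fin m → ℤ // t₁ ≤ t}) (α : Fin m),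
      sol F a (stepv t α) = F α t (sol F a t) := by
  suffices H : ∀ n (t : {t : Fin m → ℤ // t₁ ≤ t}), Nsum t₁ t.1 = n →
      ∀ α, sol F a (stepv t α) = F α t (sol F a t) by
    exact fun t α => H _ t rfl α
  intro n
  induction n using Nat.strong_induction_on with
  | _ n ih =>
    intro t ht α
    have hns : Nsum t₁ (stepv t α).1 = n + 1 := by
      have : (stepv t α).1 = t.1 + (Pi.single α 1 : Fin m → ℤ) := rfl
      rw [this, nsum_step t.2 α, ht]
    have hex : ∃ β, t₁ β < (stepv t α).1 β := by
      refine ⟨α, ?_⟩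
      have h1 : (stepv t α).1 α = t.1 α + 1 := by
        show (t.1 + (Pi.single α 1 : Fin m → ℤ)) α = t.1 α + 1
        rw [Pi.add_apply, Pi.single_eq_same]
      have hle : t₁ α ≤ t.1 α := t.2 α
      omega
    have hβ := Classical.choose_spec hex
    rw [sol, hns, solAux, dif_pos hex]
    by_cases hba : Classical.choose hex = α
    · simp only [hba]
      have heq : ∀ h : t₁ ≤ (stepv t α).1 - Pi.single α 1,
          (⟨(stepv t α).1 - Pi.single α 1, h⟩ : {t : Fin m → ℤ // t₁ ≤ t}) = t := by
        intro h
        apply Subtype.ext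
        show t.1 + (Pi.single α 1 : Fin m → ℤ) - Pi.single α 1 = t.1
        rw [add_sub_cancel_right]
      rw [heq, sol, ht]
    · have hstv : (stepv t α).1 (Classical.choose hex) = t.1 (Classical.choose hex) := by
        show (t.1 + (Pi.single α 1 : Fin m → ℤ)) (Classical.choose hex)
          = t.1 (Classical.choose hex)
        rw [Pi.add_apply, Pi.single_apply, if_neg hba, add_zero]
      have hβ' : t₁ (Classical.choose hex) < t.1 (Classical.choose hex) := hstv ▸ hβ
      refine Eq.trans ?_ (?_ :
        F (Classical.choose hex)
          (stepv ⟨t.1 - Pi.single (Classical.choose hex) 1, pred_mem t.2 hβ'⟩ α)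
          (sol F a (stepv ⟨t.1 - Pi.single (Classical.choose hex) 1, pred_mem t.2 hβ'⟩ α))
        = F α t (sol F a t))
      · -- rewrite the choose-branch term into the stepv-u form
        have heq : ∀ h : t₁ ≤ (stepv t α).1 - Pi.single (Classical.choose hex) 1,
            (⟨(stepv t α).1 - Pi.single (Classical.choose hex) 1, h⟩
              : {t : Fin m → ℤ // t₁ ≤ t})
            = stepv ⟨t.1 - Pi.single (Classical.choose hex) 1, pred_mem t.2 hβ'⟩ α := by
          intro h
          apply Subtype.ext
          show t.1 + (Pi.single α 1 : Fin m → ℤ) - Pi.single (Classical.choose hex) 1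
            = t.1 - Pi.single (Classical.choose hex) 1 + Pi.single α 1
          ring
        rw [heq]
        congr 1
        show solAux F a n _ = solAux F a (Nsum t₁ _) _
        congr 1
        have h1 : Nsum t₁ t.1
            = Nsum t₁ (t.1 - Pi.single (Classical.choose hex) 1) + 1 := nsum_pred t.2 hβ'
        have h2 : Nsum t₁ ((t.1 - Pi.single (Classical.choose hex) 1) + Pi.single α 1)
            = Nsum t₁ (t.1 - Pi.single (Classical.choose hex) 1) + 1 :=
          nsum_step (pred_mem t.2 hβ') α
        show n = Nsum t₁ ((t.1 - Pi.single (Classical.choose hex) 1) + Pi.single α 1)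
        omega
      · -- main computation via IH and hcomm
        have hnu : Nsum t₁ (t.1 - Pi.single (Classical.choose hex) 1) + 1 = n := by
          have h1 := nsum_pred t.2 hβ'
          omega
        have hub : stepv ⟨t.1 - Pi.single (Classical.choose hex) 1, pred_mem t.2 hβ'⟩
            (Classical.choose hex) = t := by
          apply Subtype.ext
          show t.1 - Pi.single (Classical.choose hex) 1 + Pi.single (Classical.choose hex) 1
            = t.1
          rw [sub_add_cancel]
        rw [ih (Nsum t₁ (t.1 - Pi.single (Classical.choose hex) 1)) (by omega)
            ⟨t.1 - Pi.single (Classical.choose hex) 1, pred_mem t.2 hβ'⟩ rfl α,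
          hcomm, hub,
          ← ih (Nsum t₁ (t.1 - Pi.single (Classical.choose hex) 1)) (by omega)
            ⟨t.1 - Pi.single (Classical.choose hex) 1, pred_mem t.2 hβ'⟩ rfl
            (Classical.choose hex),
          hub]

end Aux

/-- Proposition 6 b). Suppose the compatibility conditions
`F_α(t+1_β, F_β(t,x)) = F_β(t+1_α, F_α(t,x))` hold on `{t ≥ t₀ − 1_{α₀}}`.
If for every `x₀ ∈ M` there is at most one solution of
`x(t+1_α) = F_α(t, x(t))` on `{t ≥ t₀ − 1_{α₀}}` with `x(t₀) = x₀`, then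
`F_{α₀}(t₀ − 1_{α₀}, ·)` is injective. -/
theorem stmt_16 {m : ℕ} (hm : 1 ≤ m) {M : Type*} [Nonempty M]
    (t₀ : Fin m → ℤ) (α₀ : Fin m)
    (F : Fin m → {t : Fin m → ℤ // t₀ - Pi.single α₀ 1 ≤ t} → M → M)
    (hcomm : ∀ (t : {t : Fin m → ℤ // t₀ - Pi.single α₀ 1 ≤ t}) (x : M)
        (α β : Fin m),
      F α (stepv t β) (F β t x) = F β (stepv t α) (F α t x))
    (huniq : ∀ x₀ : M,
      ∀ x y : {t : Fin m → ℤ // t₀ - Pi.single α₀ 1 ≤ t} → M,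
        ((∀ (t : {t : Fin m → ℤ // t₀ - Pi.single α₀ 1 ≤ t}) (α : Fin m),
            x (stepv t α) = F α t (x t)) ∧ x ⟨t₀, sub_single_le t₀ α₀⟩ = x₀) →
        ((∀ (t : {t : Fin m → ℤ // t₀ - Pi.single α₀ 1 ≤ t}) (α : Fin m),
            y (stepv t α) = F α t (y t)) ∧ y ⟨t₀, sub_single_le t₀ α₀⟩ = x₀) →
        x = y) :
    Function.Injective
      (F α₀ ⟨t₀ - Pi.single α₀ 1, le_refl _⟩) := by
  intro a b hab
  have hbase := (sol_base F a)
  have hbase' := (sol_base F b)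
  have hstep := sol_step F hcomm a
  have hstep' := sol_step F hcomm b
  have ht0 : stepv (⟨t₀ - Pi.single α₀ 1, le_refl _⟩ :
      {t : Fin m → ℤ // t₀ - Pi.single α₀ 1 ≤ t}) α₀ = ⟨t₀, sub_single_le t₀ α₀⟩ := by
    apply Subtype.ext
    show t₀ - Pi.single α₀ 1 + Pi.single α₀ 1 = t₀
    rw [sub_add_cancel]
  have hxa : sol F a ⟨t₀, sub_single_le t₀ α₀⟩
      = F α₀ ⟨t₀ - Pi.single α₀ 1, le_refl _⟩ a := by
    rw [← ht0, hstep, hbase]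
  have hxb : sol F b ⟨t₀, sub_single_le t₀ α₀⟩
      = F α₀ ⟨t₀ - Pi.single α₀ 1, le_refl _⟩ a := by
    rw [← ht0, hstep', hbase', ← hab]
  have := huniq (F α₀ ⟨t₀ - Pi.single α₀ 1, le_refl _⟩ a) (sol F a) (sol F b)
    ⟨hstep, hxa⟩ ⟨hstep', hxb⟩
  calc a = sol F a ⟨t₀ - Pi.single α₀ 1, le_refl _⟩ := (sol_base F a).symm
    _ = sol F b ⟨t₀ - Pi.single α₀ 1, le_refl _⟩ := by rw [this]
    _ = b := sol_base F b
end
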